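/- The recursively defined series-parallel graphs A_i and B_i (A_1 = single edge; B_i = parallel composition of two series compositions edge–A_i–edge; A_i = parallel composition of an edge with the series composition edge–B_{i−1}–edge) are bipartite and subcubic, with both terminals of degree two and different colors in a proper 2-coloring. -/

import Mathlib

/-!
Series and parallel composition both glue the disjoint union of two graphs along a partial
matching of their vertices (`t₁ ~ s₂`, resp. `s₁ ~ s₂` and `t₁ ~ t₂`). A glued vertex gets the
union of the two neighbourhoods, disjoint as long as no neighbour of one is glued to a neighbour
of the other, and every other vertex keeps its neighbourhood. So "subcubic with terminal degrees
`ds`, `dt`" composes: series adds the degrees of the inner terminals, parallel adds terminal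
degrees pairwise. Edge–`X`–edge has non-adjacent terminals of degree one whenever `X` has
terminal degrees at most two, so putting two such graphs (or an edge and one) in parallel gives
terminal degrees `1 + 1 = 2`. Likewise a proper 2-colouring with `s` coloured `false` composes,
the colour of `t` being xor-ed under series and kept under parallel composition.
-/

/-- A two-terminal graph: a graph together with two designated terminal vertices. -/
structure TTG where
  V : Type
  G : SimpleGraph V
  s : V
  t : V

/-- The two-terminal graph consisting of a single edge. -/
def edgeTTG : TTG where
  V := Bool
  G := { Adj := fun x y => x ≠ y
         symm := ⟨fun _ _ h => h.symm⟩
         loopless := ⟨fun _ h => h rfl⟩ }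
  s := false
  t := true

/-- The disjoint-union adjacency on the sum of the vertex types of two graphs. -/
def sumAdj (G₁ G₂ : TTG) : G₁.V ⊕ G₂.V → G₁.V ⊕ G₂.V → Prop
  | .inl a, .inl b => G₁.G.Adj a b
  | .inr a, .inr b => G₂.G.Adj a b
  | _, _ => False

theorem sumAdj_symm (G₁ G₂ : TTG) {a b : G₁.V ⊕ G₂.V} (h : sumAdj G₁ G₂ a b) :
    sumAdj G₁ G₂ b a := by
  cases a <;> cases b <;> simp only [sumAdj] at h ⊢ <;>
    first | exact h.symm | exact h.elim

/-- Series composition: identify `t₁` with `s₂`. -/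
def seriesTTG (G₁ G₂ : TTG) : TTG where
  V := Quotient (Relation.EqvGen.setoid fun x y : G₁.V ⊕ G₂.V =>
    x = Sum.inl G₁.t ∧ y = Sum.inr G₂.s)
  G := { Adj := fun x y => x ≠ y ∧ ∃ a b, Quotient.mk _ a = x ∧ Quotient.mk _ b = y ∧
           sumAdj G₁ G₂ a b
         symm := by
           constructor
           rintro x y ⟨h, a, b, ha, hb, hab⟩
           exact ⟨h.symm, b, a, hb, ha, sumAdj_symm G₁ G₂ hab⟩
         loopless := by constructor; rintro x ⟨h, -⟩; exact h rfl }
  s := Quotient.mk _ (Sum.inl G₁.s)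
  t := Quotient.mk _ (Sum.inr G₂.t)

/-- Parallel composition: identify `s₁` with `s₂` and `t₁` with `t₂`. -/
def parallelTTG (G₁ G₂ : TTG) : TTG where
  V := Quotient (Relation.EqvGen.setoid fun x y : G₁.V ⊕ G₂.V =>
    (x = Sum.inl G₁.s ∧ y = Sum.inr G₂.s) ∨ (x = Sum.inl G₁.t ∧ y = Sum.inr G₂.t))
  G := { Adj := fun x y => x ≠ y ∧ ∃ a b, Quotient.mk _ a = x ∧ Quotient.mk _ b = y ∧
           sumAdj G₁ G₂ a b
         symm := by
           constructor
           rintro x y ⟨h, a, b, ha, hb, hab⟩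
           exact ⟨h.symm, b, a, hb, ha, sumAdj_symm G₁ G₂ hab⟩
         loopless := by constructor; rintro x ⟨h, -⟩; exact h rfl }
  s := Quotient.mk _ (Sum.inl G₁.s)
  t := Quotient.mk _ (Sum.inl G₁.t)

/-- The graph `B` built from a graph `X`: the parallel composition of two copies of
edge–`X`–edge. -/
def Bfrom (X : TTG) : TTG :=
  parallelTTG (seriesTTG (seriesTTG edgeTTG X) edgeTTG)
    (seriesTTG (seriesTTG edgeTTG X) edgeTTG)

/-- The recursively defined series-parallel graphs `A_i`:
`A_1` is a single edge; `A_{i+1}` is the parallel composition of an edge with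
edge–`B_i`–edge, where `B_i = Bfrom (A_i)`. -/
def Agraph : ℕ → TTG
  | 0 => edgeTTG
  | 1 => edgeTTG
  | (n + 2) => parallelTTG edgeTTG
      (seriesTTG (seriesTTG edgeTTG (Bfrom (Agraph (n + 1)))) edgeTTG)

/-- The recursively defined series-parallel graphs `B_i`. -/
def Bgraph (n : ℕ) : TTG := Bfrom (Agraph n)

structure Sum.IsPartialMatching {α β : Type*} (r : α ⊕ β → α ⊕ β → Prop) : Prop where
  isLeft_of_rel : ∀ a b, r a b → a.isLeft
  isRight_of_rel : ∀ a b, r a b → b.isRight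
  functional : ∀ a b c, r a b → r a c → b = c
  injective : ∀ a b c, r a c → r b c → a = b

namespace Sum.IsPartialMatching

variable {α β : Type*} {r : α ⊕ β → α ⊕ β → Prop}

theorem eqvGen_iff (hr : IsPartialMatching r) {a b : α ⊕ β} :
    Relation.EqvGen r a b ↔ a = b ∨ r a b ∨ r b a := by
  have hchain : ∀ a b c, r a b → ¬ r b c := fun a b c hab hbc => by
    have := hr.isRight_of_rel a b hab
    have := hr.isLeft_of_rel b c hbc
    cases b <;> simp_all
  have hequiv : Equivalence fun a b => a = b ∨ r a b ∨ r b a := by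
    refine ⟨fun _ => Or.inl rfl, fun h => by tauto, ?_⟩
    rintro a b c (rfl | hab | hba) (rfl | hbc | hcb)
    all_goals first
      | tauto
      | exact (hchain _ _ _ hab hbc).elim
      | exact (hchain _ _ _ hcb hba).elim
      | exact Or.inl (hr.injective _ _ _ hab hcb)
      | exact Or.inl (hr.functional _ _ _ hba hbc)
  refine ⟨fun h => hequiv.eqvGen_iff.mp (h.mono fun a b hab => Or.inr (Or.inl hab)), ?_⟩
  rintro (rfl | hab | hba)
  · exact Relation.EqvGen.refl a
  · exact Relation.EqvGen.rel a b hab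
  · exact Relation.EqvGen.symm _ _ (Relation.EqvGen.rel b a hba)

end Sum.IsPartialMatching

namespace TTG

noncomputable def degree (X : TTG) (v : X.V) : ℕ∞ := (X.G.neighborSet v).encard

theorem encard_setOf_sumAdj_inl (G₁ G₂ : TTG) (v : G₁.V) :
    {b | sumAdj G₁ G₂ (.inl v) b}.encard = G₁.degree v := by
  have : {b | sumAdj G₁ G₂ (.inl v) b} = .inl '' G₁.G.neighborSet v := by
    ext (b | b) <;> simp [sumAdj]
  rw [this, Sum.inl_injective.encard_image, degree]

theorem encard_setOf_sumAdj_inr (G₁ G₂ : TTG) (v : G₂.V) :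
    {b | sumAdj G₁ G₂ (.inr v) b}.encard = G₂.degree v := by
  have : {b | sumAdj G₁ G₂ (.inr v) b} = .inr '' G₂.G.neighborSet v := by
    ext (b | b) <;> simp [sumAdj]
  rw [this, Sum.inr_injective.encard_image, degree]

theorem isLeft_eq_of_sumAdj {G₁ G₂ : TTG} {a b : G₁.V ⊕ G₂.V} (h : sumAdj G₁ G₂ a b) :
    a.isLeft = b.isLeft := by
  cases a <;> cases b <;> simp_all [sumAdj]

/-- Both `(seriesTTG G₁ G₂).G` and `(parallelTTG G₁ G₂).G` are, by definition, `glueGraph` of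
their gluing relation. -/
def glueGraph (G₁ G₂ : TTG) (r : G₁.V ⊕ G₂.V → G₁.V ⊕ G₂.V → Prop) :
    SimpleGraph (Quotient (Relation.EqvGen.setoid r)) where
  Adj x y := x ≠ y ∧ ∃ a b, Quotient.mk _ a = x ∧ Quotient.mk _ b = y ∧ sumAdj G₁ G₂ a b
  symm := ⟨fun _ _ ⟨h, a, b, ha, hb, hab⟩ => ⟨h.symm, b, a, hb, ha, sumAdj_symm G₁ G₂ hab⟩⟩
  loopless := ⟨fun _ h => h.1 rfl⟩

section Glue

variable {G₁ G₂ : TTG} {r : G₁.V ⊕ G₂.V → G₁.V ⊕ G₂.V → Prop}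

local notation "π" => Quotient.mk (Relation.EqvGen.setoid r)

theorem mk_eq_mk_iff (hr : Sum.IsPartialMatching r) {a b : G₁.V ⊕ G₂.V} :
    π a = π b ↔ a = b ∨ r a b ∨ r b a :=
  Quotient.eq.trans hr.eqvGen_iff

theorem eq_of_mk_eq_mk (hr : Sum.IsPartialMatching r) {a b : G₁.V ⊕ G₂.V} (h : π a = π b)
    (hside : a.isLeft = b.isLeft) : a = b := by
  rcases (mk_eq_mk_iff hr).mp h with h | h | h
  · exact h
  all_goals
    have := hr.isLeft_of_rel _ _ h; have := hr.isRight_of_rel _ _ h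
    cases a <;> cases b <;> simp_all

theorem mk_ne_mk_of_sumAdj (hr : Sum.IsPartialMatching r) {a b : G₁.V ⊕ G₂.V}
    (h : sumAdj G₁ G₂ a b) : π a ≠ π b := fun hab => by
  obtain rfl := eq_of_mk_eq_mk hr hab (isLeft_eq_of_sumAdj h)
  cases a <;> simp [sumAdj] at h

theorem neighborSet_glueGraph (hr : Sum.IsPartialMatching r) (a : G₁.V ⊕ G₂.V) :
    (glueGraph G₁ G₂ r).neighborSet (π a) =
      π '' {b | ∃ a', π a' = π a ∧ sumAdj G₁ G₂ a' b} := by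
  ext x
  constructor
  · rintro ⟨-, a', b, ha', rfl, hab⟩
    exact ⟨b, ⟨a', ha', hab⟩, rfl⟩
  · rintro ⟨b, ⟨a', ha', hab⟩, rfl⟩
    exact ⟨ha' ▸ mk_ne_mk_of_sumAdj hr hab, a', b, ha', rfl, hab⟩

theorem encard_neighborSet_glueGraph_of_unmatched (hr : Sum.IsPartialMatching r)
    {a : G₁.V ⊕ G₂.V} (ha : ∀ b, ¬ r a b ∧ ¬ r b a) :
    ((glueGraph G₁ G₂ r).neighborSet (π a)).encard = {b | sumAdj G₁ G₂ a b}.encard := by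
  have hclass : ∀ a', π a' = π a ↔ a' = a := fun a' => by
    rw [mk_eq_mk_iff hr]; have := ha a'; tauto
  simp only [neighborSet_glueGraph hr, hclass, exists_eq_left]
  exact Set.InjOn.encard_image fun b hb b' hb' h =>
    eq_of_mk_eq_mk hr h ((isLeft_eq_of_sumAdj hb).symm.trans (isLeft_eq_of_sumAdj hb'))

theorem neighborSet_glueGraph_of_rel (hr : Sum.IsPartialMatching r) {a a' : G₁.V ⊕ G₂.V}
    (h : r a a') : (glueGraph G₁ G₂ r).neighborSet (π a) =
      π '' ({b | sumAdj G₁ G₂ a b} ∪ {b | sumAdj G₁ G₂ a' b}) := by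
  have hleft := hr.isLeft_of_rel _ _ h
  have hclass : ∀ c, π c = π a ↔ c = a ∨ c = a' := fun c => by
    rw [mk_eq_mk_iff hr]
    refine ⟨?_, ?_⟩
    · rintro (rfl | hca | hac)
      · exact Or.inl rfl
      · have := hr.isRight_of_rel _ _ hca
        cases a <;> simp_all
      · exact Or.inr (hr.functional _ _ _ hac h)
    · rintro (rfl | rfl)
      · exact Or.inl rfl
      · exact Or.inr (Or.inr h)
  simp only [neighborSet_glueGraph hr, hclass, or_and_right, exists_or, exists_eq_left,
    Set.ofPred_or]

theorem encard_neighborSet_glueGraph_of_rel (hr : Sum.IsPartialMatching r)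
    {a a' : G₁.V ⊕ G₂.V} (h : r a a')
    (hdisj : ∀ b b', sumAdj G₁ G₂ a b → sumAdj G₁ G₂ a' b' → ¬ r b b') :
    ((glueGraph G₁ G₂ r).neighborSet (π a)).encard =
      {b | sumAdj G₁ G₂ a b}.encard + {b | sumAdj G₁ G₂ a' b}.encard := by
  have hleft := hr.isLeft_of_rel _ _ h
  have hright := hr.isRight_of_rel _ _ h
  have hinj : ({b | sumAdj G₁ G₂ a b} ∪ {b | sumAdj G₁ G₂ a' b}).InjOn π := by
    have hS : ∀ c ∈ {b | sumAdj G₁ G₂ a b} ∪ {b | sumAdj G₁ G₂ a' b}, c.isLeft →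
        sumAdj G₁ G₂ a c := by
      rintro c (hc | hc) hcl
      · exact hc
      · have := isLeft_eq_of_sumAdj hc; cases a' <;> cases c <;> simp_all
    have hT : ∀ c ∈ {b | sumAdj G₁ G₂ a b} ∪ {b | sumAdj G₁ G₂ a' b}, c.isRight →
        sumAdj G₁ G₂ a' c := by
      rintro c (hc | hc) hcr
      · have := isLeft_eq_of_sumAdj hc; cases a <;> cases c <;> simp_all
      · exact hc
    intro b hb b' hb' hbb'
    rcases (mk_eq_mk_iff hr).mp hbb' with h' | h' | h'
    · exact h'
    · exact (hdisj _ _ (hS b hb (hr.isLeft_of_rel _ _ h'))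
        (hT b' hb' (hr.isRight_of_rel _ _ h')) h').elim
    · exact (hdisj _ _ (hS b' hb' (hr.isLeft_of_rel _ _ h'))
        (hT b hb (hr.isRight_of_rel _ _ h')) h').elim
  rw [neighborSet_glueGraph_of_rel hr h, hinj.encard_image, Set.encard_union_eq]
  rw [Set.disjoint_left]
  intro b hb hb'
  have := isLeft_eq_of_sumAdj hb; have := isLeft_eq_of_sumAdj hb'
  cases a <;> cases a' <;> simp_all

theorem encard_neighborSet_glueGraph_le (hr : Sum.IsPartialMatching r) {n : ℕ∞}
    (hunmatched : ∀ a, (∀ b, ¬ r a b ∧ ¬ r b a) → {b | sumAdj G₁ G₂ a b}.encard ≤ n)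
    (hmatched : ∀ a a', r a a' →
      {b | sumAdj G₁ G₂ a b}.encard + {b | sumAdj G₁ G₂ a' b}.encard ≤ n)
    (x : Quotient (Relation.EqvGen.setoid r)) :
    ((glueGraph G₁ G₂ r).neighborSet x).encard ≤ n := by
  have hle : ∀ a a', r a a' → ((glueGraph G₁ G₂ r).neighborSet (π a)).encard ≤ n :=
    fun a a' h => calc
      _ ≤ ({b | sumAdj G₁ G₂ a b} ∪ {b | sumAdj G₁ G₂ a' b}).encard := by
        rw [neighborSet_glueGraph_of_rel hr h]; exact Set.encard_image_le _ _
      _ ≤ _ := Set.encard_union_le _ _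
      _ ≤ n := hmatched a a' h
  induction x using Quotient.inductionOn with | h a => ?_
  by_cases hm : ∃ b, r a b ∨ r b a
  · obtain ⟨b, hab | hba⟩ := hm
    · exact hle a b hab
    · rw [(mk_eq_mk_iff hr).mpr (Or.inr (Or.inr hba))]
      exact hle b a hba
  · push Not at hm
    rw [encard_neighborSet_glueGraph_of_unmatched hr hm]
    exact hunmatched a hm

theorem exists_coloring_glueGraph (c : G₁.V ⊕ G₂.V → Bool) (hc : ∀ a b, r a b → c a = c b)
    (hp : ∀ a b, sumAdj G₁ G₂ a b → c a ≠ c b) :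
    ∃ c' : Quotient (Relation.EqvGen.setoid r) → Bool,
      (∀ x y, (glueGraph G₁ G₂ r).Adj x y → c' x ≠ c' y) ∧
        ∀ a, c' (π a) = c a := by
  have hker : Equivalence fun a b => c a = c b := InvImage.equivalence _ _ eq_equivalence
  refine ⟨Quotient.lift c fun a b hab => hker.eqvGen_iff.mp (hab.mono hc), ?_, fun _ => rfl⟩
  rintro _ _ ⟨-, a, b, rfl, rfl, hab⟩
  exact hp a b hab

end Glue

/-- `X` has a proper 2-colouring with `s` coloured `false` and `t` coloured `p`. -/
def TwoColorable (X : TTG) (p : Bool) : Prop :=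
  ∃ c : X.V → Bool, (∀ u v, X.G.Adj u v → c u ≠ c v) ∧ c X.s = false ∧ c X.t = p

theorem twoColorable_edgeTTG : edgeTTG.TwoColorable true :=
  ⟨id, fun _ _ h => h, rfl, rfl⟩

theorem TwoColorable.series {G₁ G₂ : TTG} {p q : Bool} (h₁ : G₁.TwoColorable p)
    (h₂ : G₂.TwoColorable q) : (seriesTTG G₁ G₂).TwoColorable (xor p q) := by
  obtain ⟨c₁, hc₁, hs₁, ht₁⟩ := h₁
  obtain ⟨c₂, hc₂, hs₂, ht₂⟩ := h₂
  -- recolour `G₂` so that its source gets the colour `p` of the sink of `G₁`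
  obtain ⟨c, hc, hcmk⟩ := exists_coloring_glueGraph (G₁ := G₁) (G₂ := G₂)
    (r := fun x y => x = .inl G₁.t ∧ y = .inr G₂.s) (Sum.elim c₁ fun v => xor p (c₂ v))
    (by rintro _ _ ⟨rfl, rfl⟩; simp [hs₂, ht₁])
    (by rintro (u | u) (v | v) h <;> simp_all [sumAdj])
  exact ⟨c, hc, by rw [← hs₁]; exact hcmk _, by rw [← ht₂]; exact hcmk _⟩

theorem TwoColorable.parallel {G₁ G₂ : TTG} {p : Bool} (h₁ : G₁.TwoColorable p)
    (h₂ : G₂.TwoColorable p) : (parallelTTG G₁ G₂).TwoColorable p := by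
  obtain ⟨c₁, hc₁, hs₁, ht₁⟩ := h₁
  obtain ⟨c₂, hc₂, hs₂, ht₂⟩ := h₂
  obtain ⟨c, hc, hcmk⟩ := exists_coloring_glueGraph (G₁ := G₁) (G₂ := G₂)
    (r := fun x y => (x = .inl G₁.s ∧ y = .inr G₂.s) ∨ (x = .inl G₁.t ∧ y = .inr G₂.t))
    (Sum.elim c₁ c₂)
    (by rintro _ _ (⟨rfl, rfl⟩ | ⟨rfl, rfl⟩) <;> simp [*])
    (by rintro (u | u) (v | v) h <;> simp_all [sumAdj])
  exact ⟨c, hc, by rw [← hs₁]; exact hcmk _, by rw [← ht₁]; exact hcmk _⟩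

section Series

variable {G₁ G₂ : TTG}

theorem isPartialMatching_series :
    Sum.IsPartialMatching fun x y : G₁.V ⊕ G₂.V => x = .inl G₁.t ∧ y = .inr G₂.s where
  isLeft_of_rel := by rintro _ _ ⟨rfl, rfl⟩; rfl
  isRight_of_rel := by rintro _ _ ⟨rfl, rfl⟩; rfl
  functional := by rintro _ _ _ ⟨rfl, rfl⟩ ⟨-, rfl⟩; rfl
  injective := by rintro _ _ _ ⟨rfl, rfl⟩ ⟨rfl, -⟩; rfl

theorem series_s_ne_t (h : G₁.s ≠ G₁.t) : (seriesTTG G₁ G₂).s ≠ (seriesTTG G₁ G₂).t := by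
  simp [seriesTTG, mk_eq_mk_iff isPartialMatching_series, h]

theorem series_not_adj_s_t (h₁ : G₁.s ≠ G₁.t) (h₂ : G₂.s ≠ G₂.t) :
    ¬ (seriesTTG G₁ G₂).G.Adj (seriesTTG G₁ G₂).s (seriesTTG G₁ G₂).t := by
  rintro ⟨-, a, b, ha, hb, hab⟩
  simp only [seriesTTG, mk_eq_mk_iff isPartialMatching_series] at ha hb
  simp [h₁, Ne.symm h₂] at ha hb
  simp [ha, hb, sumAdj] at hab

theorem series_degree_s (h : G₁.s ≠ G₁.t) :
    (seriesTTG G₁ G₂).degree (seriesTTG G₁ G₂).s = G₁.degree G₁.s :=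
  (encard_neighborSet_glueGraph_of_unmatched (a := .inl G₁.s) isPartialMatching_series
    (by simp [h])).trans (encard_setOf_sumAdj_inl G₁ G₂ G₁.s)

theorem series_degree_t (h : G₂.s ≠ G₂.t) :
    (seriesTTG G₁ G₂).degree (seriesTTG G₁ G₂).t = G₂.degree G₂.t :=
  (encard_neighborSet_glueGraph_of_unmatched (a := .inr G₂.t) isPartialMatching_series
    (by simp [Ne.symm h])).trans (encard_setOf_sumAdj_inr G₁ G₂ G₂.t)

theorem series_degree_le {n : ℕ∞} (h₁ : ∀ v, G₁.degree v ≤ n) (h₂ : ∀ v, G₂.degree v ≤ n)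
    (hmid : G₁.degree G₁.t + G₂.degree G₂.s ≤ n) (x : (seriesTTG G₁ G₂).V) :
    (seriesTTG G₁ G₂).degree x ≤ n := by
  refine encard_neighborSet_glueGraph_le isPartialMatching_series ?_ ?_ x
  · rintro (v | v) -
    · rw [encard_setOf_sumAdj_inl]; exact h₁ v
    · rw [encard_setOf_sumAdj_inr]; exact h₂ v
  · rintro _ _ ⟨rfl, rfl⟩
    rwa [encard_setOf_sumAdj_inl, encard_setOf_sumAdj_inr]

end Series

section Parallel

variable {G₁ G₂ : TTG}

theorem isPartialMatching_parallel (h₁ : G₁.s ≠ G₁.t) (h₂ : G₂.s ≠ G₂.t) :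
    Sum.IsPartialMatching fun x y : G₁.V ⊕ G₂.V =>
      (x = .inl G₁.s ∧ y = .inr G₂.s) ∨ (x = .inl G₁.t ∧ y = .inr G₂.t) where
  isLeft_of_rel := by rintro _ _ (⟨rfl, rfl⟩ | ⟨rfl, rfl⟩) <;> rfl
  isRight_of_rel := by rintro _ _ (⟨rfl, rfl⟩ | ⟨rfl, rfl⟩) <;> rfl
  functional := by
    rintro _ _ _ (⟨rfl, rfl⟩ | ⟨rfl, rfl⟩) (⟨h, rfl⟩ | ⟨h, rfl⟩) <;> simp_all
  injective := by
    rintro _ _ _ (⟨rfl, rfl⟩ | ⟨rfl, rfl⟩) (⟨rfl, h⟩ | ⟨rfl, h⟩) <;> simp_all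

theorem parallel_s_ne_t (h₁ : G₁.s ≠ G₁.t) (h₂ : G₂.s ≠ G₂.t) :
    (parallelTTG G₁ G₂).s ≠ (parallelTTG G₁ G₂).t := by
  simp [parallelTTG, mk_eq_mk_iff (isPartialMatching_parallel h₁ h₂), h₁]

theorem parallel_degree_s (h₁ : G₁.s ≠ G₁.t) (h₂ : G₂.s ≠ G₂.t) (hna : ¬ G₂.G.Adj G₂.s G₂.t) :
    (parallelTTG G₁ G₂).degree (parallelTTG G₁ G₂).s = G₁.degree G₁.s + G₂.degree G₂.s := by
  refine (encard_neighborSet_glueGraph_of_rel (a := .inl G₁.s) (a' := .inr G₂.s)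
    (isPartialMatching_parallel h₁ h₂) (Or.inl ⟨rfl, rfl⟩) ?_).trans ?_
  · rintro _ _ h h' (⟨rfl, rfl⟩ | ⟨rfl, rfl⟩)
    · exact G₁.G.irrefl h
    · exact hna h'
  · rw [encard_setOf_sumAdj_inl, encard_setOf_sumAdj_inr]

theorem parallel_degree_t (h₁ : G₁.s ≠ G₁.t) (h₂ : G₂.s ≠ G₂.t) (hna : ¬ G₂.G.Adj G₂.s G₂.t) :
    (parallelTTG G₁ G₂).degree (parallelTTG G₁ G₂).t = G₁.degree G₁.t + G₂.degree G₂.t := by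
  refine (encard_neighborSet_glueGraph_of_rel (a := .inl G₁.t) (a' := .inr G₂.t)
    (isPartialMatching_parallel h₁ h₂) (Or.inr ⟨rfl, rfl⟩) ?_).trans ?_
  · rintro _ _ h h' (⟨rfl, rfl⟩ | ⟨rfl, rfl⟩)
    · exact hna h'.symm
    · exact G₁.G.irrefl h
  · rw [encard_setOf_sumAdj_inl, encard_setOf_sumAdj_inr]

theorem parallel_degree_le (h₁ : G₁.s ≠ G₁.t) (h₂ : G₂.s ≠ G₂.t) {n : ℕ∞}
    (hle₁ : ∀ v, G₁.degree v ≤ n) (hle₂ : ∀ v, G₂.degree v ≤ n)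
    (hs : G₁.degree G₁.s + G₂.degree G₂.s ≤ n) (ht : G₁.degree G₁.t + G₂.degree G₂.t ≤ n)
    (x : (parallelTTG G₁ G₂).V) : (parallelTTG G₁ G₂).degree x ≤ n := by
  refine encard_neighborSet_glueGraph_le (isPartialMatching_parallel h₁ h₂) ?_ ?_ x
  · rintro (v | v) -
    · rw [encard_setOf_sumAdj_inl]; exact hle₁ v
    · rw [encard_setOf_sumAdj_inr]; exact hle₂ v
  · rintro _ _ (⟨rfl, rfl⟩ | ⟨rfl, rfl⟩)
    · rwa [encard_setOf_sumAdj_inl, encard_setOf_sumAdj_inr]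
    · rwa [encard_setOf_sumAdj_inl, encard_setOf_sumAdj_inr]

end Parallel

theorem edgeTTG_s_ne_t : edgeTTG.s ≠ edgeTTG.t := Bool.false_ne_true

theorem degree_edgeTTG (v : Bool) : edgeTTG.degree v = 1 := by
  have : edgeTTG.G.neighborSet v = {!v} := by
    ext w
    exact ne_comm.trans Bool.eq_not_iff.symm
  exact Set.encard_eq_one.mpr ⟨!v, this⟩

/-- `X` is subcubic and has distinct terminals, of degrees `ds` and `dt`. -/
structure Subcubic (X : TTG) (ds dt : ℕ∞) : Prop where
  s_ne_t : X.s ≠ X.t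
  degree_le : ∀ v, X.degree v ≤ 3
  degree_s : X.degree X.s = ds
  degree_t : X.degree X.t = dt

theorem subcubic_edgeTTG : edgeTTG.Subcubic 1 1 where
  s_ne_t := edgeTTG_s_ne_t
  degree_le v := (degree_edgeTTG v).trans_le (by norm_num)
  degree_s := degree_edgeTTG _
  degree_t := degree_edgeTTG _

theorem Subcubic.series {G₁ G₂ : TTG} {a b c d : ℕ∞} (h₁ : G₁.Subcubic a b)
    (h₂ : G₂.Subcubic c d) (hmid : b + c ≤ 3) : (seriesTTG G₁ G₂).Subcubic a d where
  s_ne_t := series_s_ne_t h₁.s_ne_t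
  degree_le := series_degree_le h₁.degree_le h₂.degree_le (by rwa [h₁.degree_t, h₂.degree_s])
  degree_s := (series_degree_s h₁.s_ne_t).trans h₁.degree_s
  degree_t := (series_degree_t h₂.s_ne_t).trans h₂.degree_t

theorem Subcubic.parallel {G₁ G₂ : TTG} {a b c d : ℕ∞} (h₁ : G₁.Subcubic a b)
    (h₂ : G₂.Subcubic c d) (hna : ¬ G₂.G.Adj G₂.s G₂.t) (hs : a + c ≤ 3) (ht : b + d ≤ 3) :
    (parallelTTG G₁ G₂).Subcubic (a + c) (b + d) where
  s_ne_t := parallel_s_ne_t h₁.s_ne_t h₂.s_ne_t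
  degree_le := parallel_degree_le h₁.s_ne_t h₂.s_ne_t h₁.degree_le h₂.degree_le
    (by rwa [h₁.degree_s, h₂.degree_s]) (by rwa [h₁.degree_t, h₂.degree_t])
  degree_s := by rw [parallel_degree_s h₁.s_ne_t h₂.s_ne_t hna, h₁.degree_s, h₂.degree_s]
  degree_t := by rw [parallel_degree_t h₁.s_ne_t h₂.s_ne_t hna, h₁.degree_t, h₂.degree_t]

theorem Subcubic.ncard_neighborSet_le {X : TTG} {a b : ℕ∞} (h : X.Subcubic a b) (v : X.V) :
    (X.G.neighborSet v).ncard ≤ 3 :=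
  (Set.encard_le_coe_iff_finite_ncard_le.mp (h.degree_le v)).2

theorem ncard_neighborSet_eq {X : TTG} {v : X.V} {k : ℕ} (h : X.degree v = k) :
    (X.G.neighborSet v).ncard = k := by
  rw [Set.ncard_def, ← degree, h, ENat.toNat_natCast]

def padEdges (X : TTG) : TTG := seriesTTG (seriesTTG edgeTTG X) edgeTTG

theorem Subcubic.padEdges {X : TTG} {d : ℕ∞} (h : X.Subcubic d d) (hd : d ≤ 2) :
    X.padEdges.Subcubic 1 1 ∧ ¬ X.padEdges.G.Adj X.padEdges.s X.padEdges.t := by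
  have h1d : 1 + d ≤ 3 := by
    calc 1 + d ≤ 1 + 2 := by gcongr
      _ = 3 := by norm_num
  have hE := subcubic_edgeTTG.series h h1d
  exact ⟨hE.series subcubic_edgeTTG (add_comm d 1 ▸ h1d),
    series_not_adj_s_t hE.s_ne_t edgeTTG_s_ne_t⟩

theorem Subcubic.bfrom {X : TTG} {d : ℕ∞} (h : X.Subcubic d d) (hd : d ≤ 2) :
    (Bfrom X).Subcubic 2 2 := by
  obtain ⟨hC, hna⟩ := h.padEdges hd
  have hB := hC.parallel hC hna (by norm_num) (by norm_num)
  rwa [one_add_one_eq_two] at hB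

theorem subcubic_Agraph_add_two : ∀ n, (Agraph (n + 2)).Subcubic 2 2 := by
  have step : ∀ {X : TTG} {d : ℕ∞}, X.Subcubic d d → d ≤ 2 →
      (parallelTTG edgeTTG (Bfrom X).padEdges).Subcubic 2 2 := fun h hd => by
    obtain ⟨hC, hna⟩ := (h.bfrom hd).padEdges le_rfl
    have hA := subcubic_edgeTTG.parallel hC hna (by norm_num) (by norm_num)
    rwa [one_add_one_eq_two] at hA
  intro n
  induction n with
  | zero => exact step subcubic_edgeTTG (by norm_num)
  | succ n ih => exact step ih le_rfl

theorem exists_subcubic_Agraph_succ (n : ℕ) : ∃ d ≤ 2, (Agraph (n + 1)).Subcubic d d := by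
  cases n with
  | zero => exact ⟨1, by norm_num, subcubic_edgeTTG⟩
  | succ n => exact ⟨2, le_rfl, subcubic_Agraph_add_two n⟩

theorem TwoColorable.padEdges {X : TTG} {p : Bool} (h : X.TwoColorable p) :
    X.padEdges.TwoColorable p := by
  have h' := (twoColorable_edgeTTG.series h).series twoColorable_edgeTTG
  rwa [Bool.true_xor, Bool.xor_true, Bool.not_not] at h'

theorem TwoColorable.bfrom {X : TTG} {p : Bool} (h : X.TwoColorable p) :
    (Bfrom X).TwoColorable p :=
  h.padEdges.parallel h.padEdges

theorem twoColorable_Agraph : ∀ n, (Agraph n).TwoColorable true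
  | 0 | 1 => twoColorable_edgeTTG
  | n + 2 => twoColorable_edgeTTG.parallel (twoColorable_Agraph (n + 1)).bfrom.padEdges

theorem TwoColorable.exists_coloring_ne {X : TTG} (h : X.TwoColorable true) :
    ∃ col : X.V → Bool, (∀ u v, X.G.Adj u v → col u ≠ col v) ∧ col X.s ≠ col X.t := by
  obtain ⟨c, hc, hs, ht⟩ := h
  exact ⟨c, hc, by simp [hs, ht]⟩

end TTG

/-- The graphs `A_i` and `B_i` are subcubic and bipartite, with a proper
2-coloring in which the two terminals get different colors; the terminals of `B_i` (for
`i ≥ 1`) and of `A_i` (for `i ≥ 2`) have degree two. -/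
theorem Agraph_Bgraph_subcubic_bipartite (i : ℕ) (hi : 1 ≤ i) :
    (∀ X ∈ ({Agraph i, Bgraph i} : Set TTG),
      (∀ v : X.V, (X.G.neighborSet v).ncard ≤ 3) ∧
      (∃ col : X.V → Bool, (∀ u v, X.G.Adj u v → col u ≠ col v) ∧ col X.s ≠ col X.t)) ∧
    ((Bgraph i).G.neighborSet (Bgraph i).s).ncard = 2 ∧
    ((Bgraph i).G.neighborSet (Bgraph i).t).ncard = 2 ∧
    (2 ≤ i →
      ((Agraph i).G.neighborSet (Agraph i).s).ncard = 2 ∧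
      ((Agraph i).G.neighborSet (Agraph i).t).ncard = 2) := by
  obtain ⟨n, rfl⟩ : ∃ n, i = n + 1 := ⟨i - 1, by omega⟩
  obtain ⟨d, hd, hA⟩ := TTG.exists_subcubic_Agraph_succ n
  have hAcol := TTG.twoColorable_Agraph (n + 1)
  have hB : (Bgraph (n + 1)).Subcubic 2 2 := hA.bfrom hd
  have hBcol : (Bgraph (n + 1)).TwoColorable true := hAcol.bfrom
  refine ⟨?_, TTG.ncard_neighborSet_eq hB.degree_s, TTG.ncard_neighborSet_eq hB.degree_t,
    fun h2 => ?_⟩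
  · rintro X (rfl | rfl | -)
    · exact ⟨hA.ncard_neighborSet_le, hAcol.exists_coloring_ne⟩
    · exact ⟨hB.ncard_neighborSet_le, hBcol.exists_coloring_ne⟩
  · obtain ⟨m, rfl⟩ : ∃ m, n = m + 1 := ⟨n - 1, by omega⟩
    have hA₂ := TTG.subcubic_Agraph_add_two m
    exact ⟨TTG.ncard_neighborSet_eq hA₂.degree_s, TTG.ncard_neighborSet_eq hA₂.degree_t⟩
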